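/- arXiv:2201.01879 — 4 statements merged into one kernel-verified Lean document; each statement's English description precedes it below -/
import Mathlib

section
/- In the Gaussian thresholding model, the OLS thresholding estimator converges almost surely to β₁ᵐ · γ, where γ = π(ω − E[p̂])/(E[p̂](1 − E[p̂])), with E[p̂] = ζ(1−π) + ωπ, ω = Φ(β₁ᵍ + β₀ᵍ − c), ζ = Φ(β₀ᵍ − c). -/
/-!
By the strong law of large numbers for the i.i.d. triples `(pᵢ, εᵢ, τᵢ)`, the sample means of
`p̂`, `m` and `p̂ m` converge almost surely to their expectations. Since `p̂² = p̂`, the OLS slope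
is a continuous function of these three means, with limit
`(E[p̂ m] - E[p̂] E[m]) / (E[p̂] (1 - E[p̂]))`. Conditioning on `pᵢ ∈ {0, 1}` gives
`E[p̂] = (1 - π) ζ + π ω` and `E[m] = β₀ᵐ + π β₁ᵐ`, and since `εᵢ` is centred and independent of
`τᵢ`, `E[p̂ m] = (1 - π) β₀ᵐ ζ + π (β₀ᵐ + β₁ᵐ) ω`; hence the covariance is `π β₁ᵐ (ω - E[p̂])`.
-/

open MeasureTheory ProbabilityTheory Filter

/-- Standard normal CDF. -/
noncomputable def Phi (x : ℝ) : ℝ := ((gaussianReal 0 1) (Set.Iic x)).toReal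

open Finset
open scoped Topology

lemma gaussianReal_ne_zero_of_volume_ne_zero {s : Set ℝ} (hs : volume s ≠ 0) :
    gaussianReal 0 1 s ≠ 0 :=
  fun h => hs (gaussianReal_absolutelyContinuous' 0 one_ne_zero h)

lemma Phi_pos (t : ℝ) : 0 < Phi t :=
  ENNReal.toReal_pos (gaussianReal_ne_zero_of_volume_ne_zero (by simp)) (measure_ne_top _ _)

lemma Phi_lt_one (t : ℝ) : Phi t < 1 := by
  have hIoi : 0 < (gaussianReal 0 1).real (Set.Ioi t) :=
    ENNReal.toReal_pos (gaussianReal_ne_zero_of_volume_ne_zero (by simp)) (measure_ne_top _ _)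
  have hcompl := probReal_compl_eq_one_sub (μ := gaussianReal 0 1) (measurableSet_Iic (a := t))
  rw [Set.compl_Iic] at hcompl
  change (gaussianReal 0 1).real (Set.Iic t) < 1
  linarith

lemma integral_const_add_gaussianReal (m : ℝ) : ∫ x, (m + x) ∂gaussianReal 0 1 = m := by
  have hid : Integrable (fun x : ℝ => x) (gaussianReal 0 1) :=
    (memLp_id_gaussianReal 1).integrable le_rfl
  rw [integral_add (integrable_const m) hid, integral_id_gaussianReal]
  simp

lemma integral_ite_le_const_add_gaussianReal (c s : ℝ) :
    ∫ x, (if c ≤ s + x then (1 : ℝ) else 0) ∂gaussianReal 0 1 = Phi (s - c) := by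
  have hsymm : gaussianReal 0 1 (Set.Ici (c - s)) = gaussianReal 0 1 (Set.Iic (s - c)) := by
    conv_lhs => rw [← neg_zero, ← gaussianReal_map_neg]
    rw [Measure.map_apply measurable_neg measurableSet_Ici, Set.neg_preimage, Set.neg_Ici, neg_sub]
  have hind : (fun x => if c ≤ s + x then (1 : ℝ) else 0) = (Set.Ici (c - s)).indicator 1 := by
    ext x
    simp only [Set.indicator_apply, Set.mem_Ici, Pi.one_apply, sub_le_iff_le_add']
  rw [hind, integral_indicator_one measurableSet_Ici, measureReal_def, hsymm]
  rfl

noncomputable def bernoulliReal (q : ℝ) : Measure ℝ :=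
  ENNReal.ofReal (1 - q) • Measure.dirac 0 + ENNReal.ofReal q • Measure.dirac 1

instance (q : ℝ) : IsFiniteMeasure (bernoulliReal q) :=
  ⟨by simp [bernoulliReal, ENNReal.add_lt_top]⟩

lemma integrable_bernoulliReal (q : ℝ) (f : ℝ → ℝ) : Integrable f (bernoulliReal q) :=
  (integrable_dirac enorm_lt_top).smul_measure ENNReal.ofReal_ne_top |>.add_measure
    ((integrable_dirac enorm_lt_top).smul_measure ENNReal.ofReal_ne_top)

lemma integral_bernoulliReal {q : ℝ} (hq : q ∈ Set.Icc (0 : ℝ) 1) (f : ℝ → ℝ) :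
    ∫ x, f x ∂bernoulliReal q = (1 - q) * f 0 + q * f 1 := by
  rw [bernoulliReal, integral_add_measure, integral_smul_measure, integral_smul_measure,
    integral_dirac, integral_dirac, ENNReal.toReal_ofReal (by linarith [hq.2]),
    ENNReal.toReal_ofReal hq.1, smul_eq_mul, smul_eq_mul]
  all_goals exact (integrable_dirac enorm_lt_top).smul_measure ENNReal.ofReal_ne_top

lemma integral_bernoulliReal_prod {α : Type*} [MeasurableSpace α] {ρ : Measure α} [SFinite ρ]
    {q : ℝ} (hq : q ∈ Set.Icc (0 : ℝ) 1) {F : ℝ × α → ℝ}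
    (hF : Integrable F ((bernoulliReal q).prod ρ)) :
    ∫ z, F z ∂(bernoulliReal q).prod ρ = (1 - q) * ∫ y, F (0, y) ∂ρ + q * ∫ y, F (1, y) ∂ρ := by
  rw [integral_prod F hF, integral_bernoulliReal hq]

noncomputable def olsSlope (x y : ℕ → ℝ) (n : ℕ) : ℝ :=
  (∑ i ∈ range n, (x i - (∑ j ∈ range n, x j) / n) * (y i - (∑ j ∈ range n, y j) / n)) /
    ∑ i ∈ range n, (x i - (∑ j ∈ range n, x j) / n) ^ 2

lemma sum_sub_average_mul_sub_average (x y : ℕ → ℝ) (n : ℕ) :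
    ∑ i ∈ range n, (x i - (∑ j ∈ range n, x j) / n) * (y i - (∑ j ∈ range n, y j) / n) =
      n * ((∑ i ∈ range n, x i * y i) / n -
        (∑ i ∈ range n, x i) / n * ((∑ i ∈ range n, y i) / n)) := by
  rcases eq_or_ne n 0 with rfl | hn
  · simp
  simp only [sub_mul, mul_sub, sum_sub_distrib, ← sum_mul, ← mul_sum, sum_const, card_range,
    nsmul_eq_mul]
  field_simp
  ring

lemma olsSlope_eq (x y : ℕ → ℝ) (n : ℕ) :
    olsSlope x y n =
      ((∑ i ∈ range n, x i * y i) / n -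
          (∑ i ∈ range n, x i) / n * ((∑ i ∈ range n, y i) / n)) /
        ((∑ i ∈ range n, x i * x i) / n -
          (∑ i ∈ range n, x i) / n * ((∑ i ∈ range n, x i) / n)) := by
  rcases eq_or_ne n 0 with rfl | hn
  · simp [olsSlope]
  simp only [olsSlope, sq, sum_sub_average_mul_sub_average]
  exact mul_div_mul_left _ _ (Nat.cast_ne_zero.mpr hn)

lemma tendsto_olsSlope {x y : ℕ → ℝ} {a b d e : ℝ}
    (hx : Tendsto (fun n : ℕ => (∑ i ∈ range n, x i) / n) atTop (𝓝 a))
    (hy : Tendsto (fun n : ℕ => (∑ i ∈ range n, y i) / n) atTop (𝓝 b))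
    (hxy : Tendsto (fun n : ℕ => (∑ i ∈ range n, x i * y i) / n) atTop (𝓝 d))
    (hxx : Tendsto (fun n : ℕ => (∑ i ∈ range n, x i * x i) / n) atTop (𝓝 e))
    (h : e - a * a ≠ 0) :
    Tendsto (olsSlope x y) atTop (𝓝 ((d - a * b) / (e - a * a))) := by
  simp only [funext (olsSlope_eq x y)]
  exact (hxy.sub (hx.mul hy)).div (hxx.sub (hx.mul hx)) h

section StrongLaw

variable {Ω E : Type*} [MeasurableSpace Ω] [MeasurableSpace E] {μ : Measure Ω}

lemma ae_tendsto_average_comp {T : ℕ → Ω → E} {ν : Measure E} (hT : ∀ i, Measurable (T i))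
    (hlaw : ∀ i, μ.map (T i) = ν) (hindep : Pairwise fun i j => IndepFun (T i) (T j) μ)
    {F : E → ℝ} (hF : Measurable F) (hFν : Integrable F ν) :
    ∀ᵐ ω ∂μ, Tendsto (fun n : ℕ => (∑ i ∈ range n, F (T i ω)) / n) atTop (𝓝 (∫ x, F x ∂ν)) := by
  have hint : Integrable (fun ω => F (T 0 ω)) μ := by
    rw [← hlaw 0] at hFν
    exact hFν.comp_measurable (hT 0)
  have hident : ∀ i, IdentDistrib (fun ω => F (T i ω)) (fun ω => F (T 0 ω)) μ μ := fun i =>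
    (⟨(hT i).aemeasurable, (hT 0).aemeasurable, by rw [hlaw i, hlaw 0]⟩ :
      IdentDistrib (T i) (T 0) μ μ).comp hF
  have hlim := strong_law_ae_real (fun i ω => F (T i ω)) hint
    (fun i j hij => (hindep hij).comp hF hF) hident
  rwa [← integral_map (hT 0).aemeasurable (hlaw 0 ▸ hF.aestronglyMeasurable), hlaw 0] at hlim

end StrongLaw

section Triples

variable {Ω β : Type*} [MeasurableSpace Ω] [MeasurableSpace β] {μ : Measure Ω}
  {X Y Z : ℕ → Ω → β}

lemma measurable_triple_entry (hX : ∀ i, Measurable (X i)) (hY : ∀ i, Measurable (Y i))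
    (hZ : ∀ i, Measurable (Z i)) (ik : ℕ × Fin 3) :
    Measurable (![X ik.1, Y ik.1, Z ik.1] ik.2) := by
  obtain ⟨i, k⟩ := ik
  fin_cases k
  exacts [hX i, hY i, hZ i]

lemma map_triple_eq_prod [IsProbabilityMeasure μ] (hX : ∀ i, Measurable (X i))
    (hY : ∀ i, Measurable (Y i)) (hZ : ∀ i, Measurable (Z i))
    (hindep : iIndepFun (fun ik : ℕ × Fin 3 => ![X ik.1, Y ik.1, Z ik.1] ik.2) μ) (i : ℕ) :
    μ.map (fun ω => (X i ω, Y i ω, Z i ω)) =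
      (μ.map (X i)).prod ((μ.map (Y i)).prod (μ.map (Z i))) := by
  have hYZ : IndepFun (Y i) (Z i) μ := hindep.indepFun (show ((i, 1) : ℕ × Fin 3) ≠ (i, 2) by simp)
  have hXYZ : IndepFun (X i) (fun ω => (Y i ω, Z i ω)) μ :=
    (hindep.indepFun_prodMk (measurable_triple_entry hX hY hZ) (i, 1) (i, 2) (i, 0)
      (by simp) (by simp)).symm
  rw [(indepFun_iff_map_prod_eq_prod_map_map (hX i).aemeasurable
    ((hY i).prodMk (hZ i)).aemeasurable).mp hXYZ,
    (indepFun_iff_map_prod_eq_prod_map_map (hY i).aemeasurable (hZ i).aemeasurable).mp hYZ]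

lemma pairwise_indepFun_triple (hX : ∀ i, Measurable (X i)) (hY : ∀ i, Measurable (Y i))
    (hZ : ∀ i, Measurable (Z i))
    (hindep : iIndepFun (fun ik : ℕ × Fin 3 => ![X ik.1, Y ik.1, Z ik.1] ik.2) μ) :
    Pairwise fun i j =>
      IndepFun (fun ω => (X i ω, Y i ω, Z i ω)) (fun ω => (X j ω, Y j ω, Z j ω)) μ := by
  intro i j hij
  have hdisj : Disjoint ({i} ×ˢ univ : Finset (ℕ × Fin 3)) ({j} ×ˢ univ) :=
    disjoint_product.mpr (Or.inl (disjoint_singleton.mpr hij))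
  let g : (k : ℕ) → ((l : ({k} ×ˢ univ : Finset (ℕ × Fin 3))) → β) → β × β × β := fun k v =>
    (v ⟨(k, 0), by simp⟩, v ⟨(k, 1), by simp⟩, v ⟨(k, 2), by simp⟩)
  have hg : ∀ k, Measurable (g k) := fun k => by fun_prop
  exact (hindep.indepFun_finset _ _ hdisj (measurable_triple_entry hX hY hZ)).comp (hg i) (hg j)

end Triples

section ThresholdModel

variable (β0m β1m β0g β1g c : ℝ)

/- Points `x : ℝ × ℝ × ℝ` stand for the triples `(pᵢ, εᵢ, τᵢ)`. -/

noncomputable def modelLaw (π : ℝ) : Measure (ℝ × ℝ × ℝ) :=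
  (bernoulliReal π).prod ((gaussianReal 0 1).prod (gaussianReal 0 1))

noncomputable def thresholdIndicator (x : ℝ × ℝ × ℝ) : ℝ :=
  if c ≤ β0g + β1g * x.1 + x.2.2 then 1 else 0

def outcome (x : ℝ × ℝ × ℝ) : ℝ := β0m + β1m * x.1 + x.2.1

lemma thresholdIndicator_mul_self (x : ℝ × ℝ × ℝ) :
    thresholdIndicator β0g β1g c x * thresholdIndicator β0g β1g c x =
      thresholdIndicator β0g β1g c x := by
  unfold thresholdIndicator; split_ifs <;> norm_num

lemma measurable_thresholdIndicator : Measurable (thresholdIndicator β0g β1g c) :=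
  Measurable.ite (measurableSet_le measurable_const (by fun_prop)) measurable_const
    measurable_const

lemma measurable_outcome : Measurable (outcome β0m β1m) := by
  unfold outcome; fun_prop

lemma norm_thresholdIndicator_le_one (x : ℝ × ℝ × ℝ) : ‖thresholdIndicator β0g β1g c x‖ ≤ 1 := by
  unfold thresholdIndicator; split_ifs <;> norm_num

variable (π : ℝ)

instance : IsFiniteMeasure (modelLaw π) := by unfold modelLaw; infer_instance

lemma integrable_thresholdIndicator (ν : Measure (ℝ × ℝ × ℝ)) [IsFiniteMeasure ν] :
    Integrable (thresholdIndicator β0g β1g c) ν :=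
  (integrable_const 1).mono' (measurable_thresholdIndicator β0g β1g c).aestronglyMeasurable
    (ae_of_all _ (norm_thresholdIndicator_le_one β0g β1g c))

lemma integrable_outcome : Integrable (outcome β0m β1m) (modelLaw π) := by
  have hp : Integrable (fun x : ℝ × ℝ × ℝ => x.1) (modelLaw π) :=
    (integrable_bernoulliReal π id).comp_fst _
  have hε : Integrable (fun x : ℝ × ℝ × ℝ => x.2.1) (modelLaw π) :=
    (((memLp_id_gaussianReal 1).integrable le_rfl).comp_fst _).comp_snd _
  exact ((integrable_const β0m).add (hp.const_mul β1m)).add hε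

lemma integrable_thresholdIndicator_mul_outcome :
    Integrable (thresholdIndicator β0g β1g c * outcome β0m β1m) (modelLaw π) :=
  (integrable_outcome β0m β1m π).bdd_mul
    (measurable_thresholdIndicator β0g β1g c).aestronglyMeasurable
    (ae_of_all _ (norm_thresholdIndicator_le_one β0g β1g c))

lemma integral_thresholdIndicator_gaussian (a : ℝ) :
    ∫ y, thresholdIndicator β0g β1g c (a, y) ∂(gaussianReal 0 1).prod (gaussianReal 0 1) =
      Phi (β0g + β1g * a - c) := by
  simp only [thresholdIndicator]
  rw [integral_fun_snd (fun t => if c ≤ β0g + β1g * a + t then (1 : ℝ) else 0),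
    integral_ite_le_const_add_gaussianReal]
  simp

lemma integral_outcome_gaussian (a : ℝ) :
    ∫ y, outcome β0m β1m (a, y) ∂(gaussianReal 0 1).prod (gaussianReal 0 1) = β0m + β1m * a := by
  simp only [outcome]
  rw [integral_fun_fst (fun t => β0m + β1m * a + t), integral_const_add_gaussianReal]
  simp

lemma integral_thresholdIndicator_mul_outcome_gaussian (a : ℝ) :
    ∫ y, (thresholdIndicator β0g β1g c * outcome β0m β1m) (a, y)
        ∂(gaussianReal 0 1).prod (gaussianReal 0 1) =
      (β0m + β1m * a) * Phi (β0g + β1g * a - c) := by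
  simp only [Pi.mul_apply, thresholdIndicator, outcome, mul_comm (ite _ _ _)]
  rw [integral_prod_mul (fun t => β0m + β1m * a + t)
    (fun t => if c ≤ β0g + β1g * a + t then (1 : ℝ) else 0), integral_const_add_gaussianReal,
    integral_ite_le_const_add_gaussianReal]

variable {π}

lemma integral_modelLaw {F : ℝ × ℝ × ℝ → ℝ} (hπ : π ∈ Set.Icc (0 : ℝ) 1)
    (hF : Integrable F (modelLaw π)) :
    ∫ x, F x ∂modelLaw π = (1 - π) * ∫ y, F (0, y) ∂(gaussianReal 0 1).prod (gaussianReal 0 1)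
      + π * ∫ y, F (1, y) ∂(gaussianReal 0 1).prod (gaussianReal 0 1) :=
  integral_bernoulliReal_prod hπ hF

lemma integral_thresholdIndicator_modelLaw (hπ : π ∈ Set.Icc (0 : ℝ) 1) :
    ∫ x, thresholdIndicator β0g β1g c x ∂modelLaw π =
      (1 - π) * Phi (β0g - c) + π * Phi (β0g + β1g - c) := by
  rw [integral_modelLaw hπ (integrable_thresholdIndicator β0g β1g c _),
    integral_thresholdIndicator_gaussian, integral_thresholdIndicator_gaussian]
  simp

lemma integral_outcome_modelLaw (hπ : π ∈ Set.Icc (0 : ℝ) 1) :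
    ∫ x, outcome β0m β1m x ∂modelLaw π = β0m + π * β1m := by
  rw [integral_modelLaw hπ (integrable_outcome β0m β1m π), integral_outcome_gaussian,
    integral_outcome_gaussian]
  ring

lemma integral_thresholdIndicator_mul_outcome_modelLaw (hπ : π ∈ Set.Icc (0 : ℝ) 1) :
    ∫ x, (thresholdIndicator β0g β1g c * outcome β0m β1m) x ∂modelLaw π =
      (1 - π) * β0m * Phi (β0g - c) + π * (β0m + β1m) * Phi (β0g + β1g - c) := by
  rw [integral_modelLaw hπ (integrable_thresholdIndicator_mul_outcome β0m β1m β0g β1g c π),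
    integral_thresholdIndicator_mul_outcome_gaussian,
    integral_thresholdIndicator_mul_outcome_gaussian]
  simp only [mul_zero, add_zero, mul_one]
  ring

end ThresholdModel

/-- In the Gaussian thresholding model mᵢ = β₀ᵐ + β₁ᵐpᵢ + εᵢ, gᵢ = β₀ᵍ + β₁ᵍpᵢ + τᵢ,
with pᵢ ~ Bernoulli(π) and εᵢ, τᵢ ~ N(0,1) all mutually independent (i.i.d. across
cells), the OLS thresholding estimator (slope of mᵢ on p̂ᵢ = 𝟙(gᵢ ≥ c), with
intercept) converges almost surely to β₁ᵐ·γ, where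
γ = π(ω − E[p̂])/(E[p̂](1 − E[p̂])), E[p̂] = ζ(1−π) + ωπ, ω = Φ(β₁ᵍ + β₀ᵍ − c),
ζ = Φ(β₀ᵍ − c). -/
theorem stmt_0 {Ω : Type*} [MeasurableSpace Ω] (μ : Measure Ω) [IsProbabilityMeasure μ]
    (p ε τ : ℕ → Ω → ℝ) (β0m β1m β0g β1g c π : ℝ) (hπ : π ∈ Set.Ioo (0:ℝ) 1)
    (hmp : ∀ i, Measurable (p i)) (hme : ∀ i, Measurable (ε i)) (hmt : ∀ i, Measurable (τ i))
    (hp : ∀ i, μ.map (p i) =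
      ENNReal.ofReal (1 - π) • Measure.dirac (0:ℝ) + ENNReal.ofReal π • Measure.dirac (1:ℝ))
    (he : ∀ i, μ.map (ε i) = gaussianReal 0 1)
    (ht : ∀ i, μ.map (τ i) = gaussianReal 0 1)
    (hindep : iIndepFun
      (fun ik : ℕ × Fin 3 => ![p ik.1, ε ik.1, τ ik.1] ik.2) μ) :
    ∀ᵐ ω ∂μ,
      Tendsto (fun n : ℕ =>
        (∑ i ∈ Finset.range n,
            ((if c ≤ β0g + β1g * p i ω + τ i ω then (1:ℝ) else 0) -
              (∑ j ∈ Finset.range n,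
                (if c ≤ β0g + β1g * p j ω + τ j ω then (1:ℝ) else 0)) / (n:ℝ)) *
            ((β0m + β1m * p i ω + ε i ω) -
              (∑ j ∈ Finset.range n, (β0m + β1m * p j ω + ε j ω)) / (n:ℝ))) /
          (∑ i ∈ Finset.range n,
            ((if c ≤ β0g + β1g * p i ω + τ i ω then (1:ℝ) else 0) -
              (∑ j ∈ Finset.range n,
                (if c ≤ β0g + β1g * p j ω + τ j ω then (1:ℝ) else 0)) / (n:ℝ)) ^ 2))
        atTop
        (nhds (β1m *
          (π * (Phi (β1g + β0g - c) -
              (Phi (β0g - c) * (1 - π) + Phi (β1g + β0g - c) * π)) /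
            ((Phi (β0g - c) * (1 - π) + Phi (β1g + β0g - c) * π) *
              (1 - (Phi (β0g - c) * (1 - π) + Phi (β1g + β0g - c) * π)))))) := by
  have hπ' : π ∈ Set.Icc (0 : ℝ) 1 := Set.Ioo_subset_Icc_self hπ
  have hTm : ∀ i, Measurable fun ω => (p i ω, ε i ω, τ i ω) := fun i =>
    (hmp i).prodMk ((hme i).prodMk (hmt i))
  have hlaw : ∀ i, μ.map (fun ω => (p i ω, ε i ω, τ i ω)) = modelLaw π := fun i => by
    rw [map_triple_eq_prod hmp hme hmt hindep i, hp i, he i, ht i]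
    rfl
  have hSLLN := fun {F} => ae_tendsto_average_comp (F := F) hTm hlaw
    (pairwise_indepFun_triple hmp hme hmt hindep)
  filter_upwards [hSLLN (measurable_thresholdIndicator β0g β1g c)
      (integrable_thresholdIndicator β0g β1g c _),
    hSLLN (measurable_outcome β0m β1m) (integrable_outcome β0m β1m π),
    hSLLN ((measurable_thresholdIndicator β0g β1g c).mul (measurable_outcome β0m β1m))
      (integrable_thresholdIndicator_mul_outcome β0m β1m β0g β1g c π)] with ω hX hY hXY
  rw [integral_thresholdIndicator_modelLaw β0g β1g c hπ'] at hX
  rw [integral_outcome_modelLaw β0m β1m hπ'] at hY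
  rw [integral_thresholdIndicator_mul_outcome_modelLaw β0m β1m β0g β1g c hπ'] at hXY
  obtain ⟨hE0, hE1⟩ : (1 - π) * Phi (β0g - c) + π * Phi (β0g + β1g - c) ∈ Set.Ioo (0 : ℝ) 1 :=
    convex_Ioo (0 : ℝ) 1 ⟨Phi_pos _, Phi_lt_one _⟩ ⟨Phi_pos _, Phi_lt_one _⟩
      (sub_nonneg.2 hπ.2.le) hπ.1.le (sub_add_cancel 1 π)
  convert tendsto_olsSlope hX hY hXY
    (hX.congr fun n => by simp only [thresholdIndicator_mul_self])
    (by rw [← mul_one_sub]; exact (mul_pos hE0 (sub_pos.2 hE1)).ne') using 2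
  · rfl
  rw [add_comm β1g β0g, ← mul_div_assoc]
  congr 1 <;> ring
end

section
/- For π = 1/2 and any fixed (β₁ᵍ, β₀ᵍ) ∈ ℝ², the Bayes-optimal decision boundary c_bayes = β₀ᵍ + β₁ᵍ/2 is a critical point of the asymptotic relative bias function viewed as a function of the threshold c: ∂b/∂c evaluated at c = c_bayes equals 0. -/
open MeasureTheory ProbabilityTheory Filter

/-- Attenuation function `γ(β₁ᵍ, π, c, β₀ᵍ) = π(ω − E)/(E(1 − E))` with
`E = ζ(1−π) + ωπ`, `ω = Φ(β₁ᵍ + β₀ᵍ − c)`, `ζ = Φ(β₀ᵍ − c)`. -/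
noncomputable def gammaFn (b1 p c b0 : ℝ) : ℝ :=
  p * (Phi (b1 + b0 - c) - (Phi (b0 - c) * (1 - p) + Phi (b1 + b0 - c) * p)) /
    ((Phi (b0 - c) * (1 - p) + Phi (b1 + b0 - c) * p) *
      (1 - (Phi (b0 - c) * (1 - p) + Phi (b1 + b0 - c) * p)))

/-!
Since `Φ(-x) = 1 - Φ(x)`, for `π = 1/2` the reflection `c ↦ 2 c_bayes - c` exchanges
`ζ` with `1 - ω` and `ω` with `1 - ζ`; it fixes the numerator `(ω - ζ)/4` and sends
`E` to `1 - E`, so `γ` (hence `b`) is symmetric about `c_bayes`. A function that is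
differentiable at its centre of symmetry has derivative zero there.
-/

theorem HasDerivAt.eq_zero_of_reflect_eq {F : Type*} [NormedAddCommGroup F] [NormedSpace ℝ F]
    {f : ℝ → F} {f' : F} {a : ℝ} (hf : HasDerivAt f f' a)
    (hreflect : ∀ᶠ x in nhds a, f (2 * a - x) = f x) : f' = 0 := by
  have hreflect' : HasDerivAt (fun x ↦ f (2 * a - x)) (-f') a :=
    HasDerivAt.comp_const_sub (2 * a) a (by rwa [two_mul, add_sub_cancel_right])
  have hneg : f' = -f' :=
    hf.unique (hreflect'.congr_of_eventuallyEq (hreflect.mono fun _ ↦ Eq.symm))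
  have htwo : (2 : ℝ) • f' = 0 := by
    rw [two_smul]; nth_rw 1 [hneg]; exact neg_add_cancel f'
  exact (smul_eq_zero.mp htwo).resolve_left two_ne_zero

theorem hasDerivAt_integral_Iic {E : Type*} [NormedAddCommGroup E] [NormedSpace ℝ E]
    [CompleteSpace E] {g : ℝ → E} (hg : Continuous g) (hint : Integrable g) (x : ℝ) :
    HasDerivAt (fun y ↦ ∫ t in Set.Iic y, g t) (g x) x := by
  have hsplit : (fun y ↦ ∫ t in Set.Iic y, g t) =
      fun y ↦ (∫ t in Set.Iic 0, g t) + ∫ t in (0)..y, g t := by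
    funext y
    rw [← intervalIntegral.integral_Iic_sub_Iic hint.integrableOn hint.integrableOn,
      add_sub_cancel]
  rw [hsplit]
  exact (hg.integral_hasStrictDerivAt 0 x).hasDerivAt.const_add _

theorem Phi_eq_integral (x : ℝ) : Phi x = ∫ t in Set.Iic x, gaussianPDFReal 0 1 t := by
  rw [Phi, gaussianReal_apply_eq_integral 0 one_ne_zero,
    ENNReal.toReal_ofReal (integral_nonneg fun t ↦ gaussianPDFReal_nonneg 0 1 t)]

theorem hasDerivAt_Phi (x : ℝ) : HasDerivAt Phi (gaussianPDFReal 0 1 x) x := by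
  rw [funext Phi_eq_integral]
  exact hasDerivAt_integral_Iic (by unfold gaussianPDFReal; fun_prop)
    (integrable_gaussianPDFReal 0 1) x

@[fun_prop]
theorem differentiable_Phi : Differentiable ℝ Phi :=
  fun x ↦ (hasDerivAt_Phi x).differentiableAt

theorem Phi_neg (x : ℝ) : Phi (-x) = 1 - Phi x := by
  have := nullSingletonClass_gaussianReal (μ := 0) (v := 1) one_ne_zero
  have hsymm : (gaussianReal 0 1).map (fun x ↦ -x) = gaussianReal 0 1 := by
    simp [gaussianReal_map_neg]
  have hIic_neg : gaussianReal 0 1 (Set.Iic (-x)) = gaussianReal 0 1 (Set.Ioi x) := by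
    nth_rw 1 [← hsymm]
    rw [Measure.map_apply measurable_neg measurableSet_Iic]
    simp [Set.neg_preimage, Set.neg_Iic, measure_congr Ioi_ae_eq_Ici.symm]
  rw [Phi, Phi, hIic_neg, ← Set.compl_Iic, prob_compl_eq_one_sub measurableSet_Iic,
    ENNReal.toReal_sub_of_le prob_le_one ENNReal.one_ne_top, ENNReal.toReal_one]

theorem gammaFn_half_reflect (b1 b0 c : ℝ) :
    gammaFn b1 (1/2) (2 * (b0 + b1 / 2) - c) b0 = gammaFn b1 (1/2) c b0 := by
  have hζ : b0 - (2 * (b0 + b1 / 2) - c) = -(b1 + b0 - c) := by ring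
  have hω : b1 + b0 - (2 * (b0 + b1 / 2) - c) = -(b0 - c) := by ring
  rw [gammaFn, gammaFn, hζ, hω, Phi_neg, Phi_neg]
  ring

theorem differentiableAt_gammaFn_half_bayes (b1 b0 : ℝ) :
    DifferentiableAt ℝ (fun c ↦ gammaFn b1 (1/2) c b0) (b0 + b1 / 2) := by
  have hE : Phi (b0 - (b0 + b1 / 2)) * (1 - 1/2) + Phi (b1 + b0 - (b0 + b1 / 2)) * (1/2)
      = 1/2 := by
    have hζ : b0 - (b0 + b1 / 2) = -(b1 + b0 - (b0 + b1 / 2)) := by ring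
    rw [hζ, Phi_neg]
    ring
  unfold gammaFn
  refine DifferentiableAt.div (by fun_prop) (by fun_prop) ?_
  rw [hE]
  norm_num

/-- For π = 1/2, the Bayes-optimal decision boundary c_bayes = β₀ᵍ + β₁ᵍ/2 is a
critical point of the asymptotic relative bias b = 1 − γ viewed as a function of
the threshold c. -/
theorem stmt_3 (b1 b0 : ℝ) :
    HasDerivAt (fun c => 1 - gammaFn b1 (1/2) c b0) 0 (b0 + b1 / 2) := by
  have hγ := (differentiableAt_gammaFn_half_bayes b1 b0).hasDerivAt
  have hcrit := hγ.eq_zero_of_reflect_eq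
    (Eventually.of_forall fun c ↦ gammaFn_half_reflect b1 b0 c)
  rw [hcrit] at hγ
  simpa using hγ.const_sub 1
end

section
/- In the Gaussian thresholding model with intercepts, the covariance between the imputed perturbation p̂ᵢ and the response mᵢ equals β₁ᵐ π (ω − E[p̂ᵢ]), and Var(p̂ᵢ) = E[p̂ᵢ](1 − E[p̂ᵢ]), where E[p̂ᵢ] = ζ(1−π) + ωπ, ω = Φ(β₁ᵍ + β₀ᵍ − c), ζ = Φ(β₀ᵍ − c). -/
/-!
`p̂` is a function of `(p, τ)`, which is independent of `ε`, so `Cov(p̂, m) = β₁ᵐ Cov(p̂, p)`.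
The pair `(p, τ)` has law `Ber(π) ⊗ N(0, 1)`, and integrating out `τ` first gives
`E[p̂] = πω + (1 - π)ζ` and `E[p̂ p] = πω`; by the symmetry of `N(0, 1)`,
`P(s + τ ≥ c) = Φ(s - c)`. Finally `Var(p̂) = E[p̂](1 - E[p̂])` since `p̂` is `0/1`-valued.
-/

open MeasureTheory ProbabilityTheory

lemma gaussianReal_real_Ici (a : ℝ) : (gaussianReal 0 1).real (Set.Ici a) = Phi (-a) := by
  have h := gaussianReal_map_neg (μ := 0) (v := 1)
  rw [neg_zero] at h
  rw [Phi, ← Measure.real_def, ← h, map_measureReal_apply measurable_neg measurableSet_Iic]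
  congr 1
  ext x
  simp

lemma integral_ite_le_add_gaussianReal (c s : ℝ) :
    ∫ y, (if c ≤ s + y then (1 : ℝ) else 0) ∂gaussianReal 0 1 = Phi (s - c) := by
  have h : (fun y : ℝ => if c ≤ s + y then (1 : ℝ) else 0) = (Set.Ici (c - s)).indicator 1 := by
    ext y
    simp [Set.indicator_apply, add_comm s]
  rw [h, integral_indicator_one measurableSet_Ici, gaussianReal_real_Ici, neg_sub]

lemma bernoulliMeasure_one_zero_eq {π : ℝ} (hπ : π ∈ Set.Icc 0 1) :
    bernoulliMeasure (1 : ℝ) 0 ⟨π, hπ⟩ =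
      ENNReal.ofReal (1 - π) • Measure.dirac 0 + ENNReal.ofReal π • Measure.dirac 1 := by
  rw [bernoulliMeasure_def, add_comm]
  congr 2 <;> ext1 <;> simp [Real.toNNReal, hπ.1, hπ.2]

lemma integral_id_bernoulliMeasure_one_zero (q : unitInterval) :
    ∫ x, x ∂bernoulliMeasure (1 : ℝ) 0 q = q := by
  simp [integral_bernoulliMeasure]

lemma memLp_id_bernoulliMeasure (x y : ℝ) (q : unitInterval) :
    MemLp id 2 (bernoulliMeasure x y q) :=
  (memLp_two_iff_integrable_sq aestronglyMeasurable_id).2 (integrable_bernoulliMeasure _ _ _ _)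

lemma integral_bernoulliMeasure_prod {X Y : Type*} [MeasurableSpace X] [MeasurableSingletonClass X]
    [MeasurableSpace Y] {κ : Measure Y} [SFinite κ] (x y : X) (q : unitInterval) {G : X × Y → ℝ}
    (hG : AEStronglyMeasurable G ((bernoulliMeasure x y q).prod κ))
    (hG_int : ∀ x, Integrable (fun y => G (x, y)) κ) :
    ∫ z, G z ∂(bernoulliMeasure x y q).prod κ =
      q * ∫ z, G (x, z) ∂κ + (1 - q) * ∫ z, G (y, z) ∂κ := by
  rw [integral_prod G ((integrable_prod_iff hG).2 ⟨ae_of_all _ hG_int,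
    integrable_bernoulliMeasure _ _ _ _⟩), integral_bernoulliMeasure, smul_eq_mul, smul_eq_mul]

lemma ProbabilityTheory.HasLaw.memLp_of_memLp_id {Ω E : Type*} [MeasurableSpace Ω]
    [MeasurableSpace E] [NormedAddCommGroup E] {μ : Measure Ω} {ν : Measure E} {X : Ω → E}
    {r : ENNReal} (hX : HasLaw X ν μ) (h : MemLp id r ν) : MemLp X r μ := by
  rw [← hX.map_eq] at h
  exact (memLp_map_measure_iff h.aestronglyMeasurable hX.aemeasurable).1 h

section ZeroOne

variable {Ω : Type*} [MeasurableSpace Ω] {μ : Measure Ω} {X : Ω → ℝ}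

lemma memLp_of_ae_eq_zero_or_one [IsFiniteMeasure μ] (hXm : AEMeasurable X μ)
    (hX : ∀ᵐ ω ∂μ, X ω = 0 ∨ X ω = 1) (r : ENNReal) : MemLp X r μ :=
  .of_bound hXm.aestronglyMeasurable 1 <| by
    filter_upwards [hX] with ω hω
    rcases hω with hω | hω <;> simp [hω]

lemma variance_eq_integral_mul_one_sub_of_ae_eq_zero_or_one [IsProbabilityMeasure μ]
    (hXm : AEMeasurable X μ) (hX : ∀ᵐ ω ∂μ, X ω = 0 ∨ X ω = 1) :
    Var[X; μ] = μ[X] * (1 - μ[X]) := by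
  rw [variance_of_ae_eq_zero_or_one hXm hX, ← integral_one_sub_of_ae_eq_zero_or_one hXm hX,
    ← integral_of_ae_eq_zero_or_one hXm hX, integral_sub (integrable_const 1)
      (memLp_one_iff_integrable.1 (memLp_of_ae_eq_zero_or_one hXm hX 1))]
  simp only [integral_const, probReal_univ, smul_eq_mul, mul_one]
  ring

end ZeroOne

lemma covariance_const_add_mul_add_of_indepFun {Ω : Type*} [MeasurableSpace Ω] {μ : Measure Ω}
    [IsProbabilityMeasure μ] {X Y Z : Ω → ℝ} (hX : MemLp X 2 μ) (hY : MemLp Y 2 μ)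
    (hZ : MemLp Z 2 μ) (hXZ : IndepFun X Z μ) (a b : ℝ) :
    cov[X, fun ω => a + b * Y ω + Z ω; μ] = b * cov[X, Y; μ] := by
  have hbY : MemLp (fun ω => b * Y ω) 2 μ := hY.const_mul b
  have hsum : (fun ω => a + b * Y ω + Z ω) = fun ω => a + ((fun ω => b * Y ω) + Z) ω := by
    ext; simp only [Pi.add_apply]; ring
  rw [hsum, covariance_const_add_right ((hbY.add hZ).integrable one_le_two),
    covariance_add_right hX hbY hZ, covariance_const_mul_right, hXZ.covariance_eq_zero hX hZ,
    add_zero]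

section Threshold

variable {Ω : Type*} [MeasurableSpace Ω] {μ : Measure Ω} [IsProbabilityMeasure μ] {p τ : Ω → ℝ}
  {q : unitInterval}

lemma measurable_threshold (a b c : ℝ) :
    Measurable fun x : ℝ × ℝ => if c ≤ a + b * x.1 + x.2 then (1 : ℝ) else 0 :=
  Measurable.ite (measurableSet_le measurable_const (by fun_prop)) measurable_const
    measurable_const

lemma integral_threshold_mul (hp : HasLaw p (bernoulliMeasure 1 0 q) μ)
    (hτ : HasLaw τ (gaussianReal 0 1) μ) (hpτ : IndepFun p τ μ) (a b c : ℝ) {f : ℝ → ℝ}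
    (hf : Measurable f) :
    ∫ ω, (if c ≤ a + b * p ω + τ ω then 1 else 0) * f (p ω) ∂μ =
      q * Phi (a + b - c) * f 1 + (1 - q) * Phi (a - c) * f 0 := by
  let G : ℝ × ℝ → ℝ := fun z => (if c ≤ a + b * z.1 + z.2 then 1 else 0) * f z.1
  have hG : Measurable G := (measurable_threshold a b c).mul (hf.comp measurable_fst)
  have hG_int (x : ℝ) : Integrable (fun y => G (x, y)) (gaussianReal 0 1) :=
    .of_bound (hG.comp measurable_prodMk_left).aestronglyMeasurable ‖f x‖ <| ae_of_all _ fun y => by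
      by_cases h : c ≤ a + b * x + y <;> simp [G, h]
  refine ((hpτ.hasLaw_prod hp hτ).integral_comp hG.aestronglyMeasurable).trans ?_
  rw [integral_bernoulliMeasure_prod _ _ _ hG.aestronglyMeasurable hG_int]
  simp only [G, integral_mul_const, integral_ite_le_add_gaussianReal, mul_one, mul_zero, add_zero]
  ring

lemma integral_threshold (hp : HasLaw p (bernoulliMeasure 1 0 q) μ)
    (hτ : HasLaw τ (gaussianReal 0 1) μ) (hpτ : IndepFun p τ μ) (a b c : ℝ) :
    ∫ ω, (if c ≤ a + b * p ω + τ ω then 1 else 0) ∂μ =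
      q * Phi (a + b - c) + (1 - q) * Phi (a - c) := by
  simpa using integral_threshold_mul hp hτ hpτ a b c (f := fun _ => 1) measurable_const

lemma integral_threshold_mul_self (hp : HasLaw p (bernoulliMeasure 1 0 q) μ)
    (hτ : HasLaw τ (gaussianReal 0 1) μ) (hpτ : IndepFun p τ μ) (a b c : ℝ) :
    ∫ ω, (if c ≤ a + b * p ω + τ ω then 1 else 0) * p ω ∂μ = q * Phi (a + b - c) := by
  simpa using integral_threshold_mul hp hτ hpτ a b c measurable_id

lemma memLp_threshold (hp : AEMeasurable p μ) (hτ : AEMeasurable τ μ) (a b c : ℝ)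
    (r : ENNReal) : MemLp (fun ω => if c ≤ a + b * p ω + τ ω then (1 : ℝ) else 0) r μ :=
  memLp_of_ae_eq_zero_or_one
    ((measurable_threshold a b c).comp_aemeasurable (hp.prodMk hτ))
    (ae_of_all _ fun _ => (ite_eq_or_eq _ _ _).symm) r

lemma covariance_threshold (hp : HasLaw p (bernoulliMeasure 1 0 q) μ)
    (hτ : HasLaw τ (gaussianReal 0 1) μ) (hpτ : IndepFun p τ μ) (a b c : ℝ) :
    cov[fun ω => if c ≤ a + b * p ω + τ ω then 1 else 0, p; μ] =
      q * (Phi (a + b - c) - ∫ ω, (if c ≤ a + b * p ω + τ ω then 1 else 0) ∂μ) := by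
  rw [covariance_eq_sub (memLp_threshold hp.aemeasurable hτ.aemeasurable a b c 2)
      (hp.memLp_of_memLp_id (memLp_id_bernoulliMeasure _ _ _)),
    hp.integral_eq, integral_id_bernoulliMeasure_one_zero]
  simp only [Pi.mul_apply]
  rw [integral_threshold_mul_self hp hτ hpτ]
  ring

end Threshold

/-- In the Gaussian thresholding model with intercepts, m = β₀ᵐ + β₁ᵐp + ε,
g = β₀ᵍ + β₁ᵍp + τ, p ~ Bernoulli(π), ε, τ ~ N(0,1), all mutually independent,
with p̂ = 𝟙(g ≥ c): Cov(p̂, m) = β₁ᵐπ(ω − E[p̂]) and Var(p̂) = E[p̂](1 − E[p̂]),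
where E[p̂] = ζ(1−π) + ωπ, ω = Φ(β₁ᵍ + β₀ᵍ − c), ζ = Φ(β₀ᵍ − c). -/
theorem stmt_9 {Ω : Type*} [MeasurableSpace Ω] (μ : Measure Ω) [IsProbabilityMeasure μ]
    (p ε τ : Ω → ℝ) (β0m β1m β0g β1g c π : ℝ) (hπ : π ∈ Set.Ioo (0:ℝ) 1)
    (hmp : Measurable p) (hme : Measurable ε) (hmt : Measurable τ)
    (hp : μ.map p =
      ENNReal.ofReal (1 - π) • Measure.dirac (0:ℝ) + ENNReal.ofReal π • Measure.dirac (1:ℝ))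
    (he : μ.map ε = gaussianReal 0 1)
    (ht : μ.map τ = gaussianReal 0 1)
    (hindep : iIndepFun ![p, ε, τ] μ) :
    let phat : Ω → ℝ := fun ω => if c ≤ β0g + β1g * p ω + τ ω then 1 else 0
    let m : Ω → ℝ := fun ω => β0m + β1m * p ω + ε ω
    let w : ℝ := Phi (β1g + β0g - c)
    let z : ℝ := Phi (β0g - c)
    let Ep : ℝ := z * (1 - π) + w * π
    ((∫ ω, phat ω * m ω ∂μ) - (∫ ω, phat ω ∂μ) * (∫ ω, m ω ∂μ) =
        β1m * π * (w - Ep)) ∧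
      variance phat μ = Ep * (1 - Ep) := by
  intro phat m w z Ep
  have hπ' : π ∈ Set.Icc 0 1 := Set.Ioo_subset_Icc_self hπ
  have hp_law : HasLaw p (bernoulliMeasure 1 0 ⟨π, hπ'⟩) μ :=
    ⟨hmp.aemeasurable, hp.trans (bernoulliMeasure_one_zero_eq hπ').symm⟩
  have hτ_law : HasLaw τ (gaussianReal 0 1) μ := ⟨hmt.aemeasurable, ht⟩
  have hpτ : IndepFun p τ μ := hindep.indepFun (show (0 : Fin 3) ≠ 2 by decide)
  have hphat_m : Measurable phat := (measurable_threshold β0g β1g c).comp (hmp.prodMk hmt)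
  have hphat_ε : IndepFun phat ε μ :=
    (hindep.indepFun_prodMk (fun i => by fin_cases i <;> assumption) 0 2 1 (by decide)
      (by decide)).comp (measurable_threshold β0g β1g c) measurable_id
  have hphat_L2 : MemLp phat 2 μ := memLp_threshold hmp.aemeasurable hmt.aemeasurable _ _ _ 2
  have hp_L2 : MemLp p 2 μ := hp_law.memLp_of_memLp_id (memLp_id_bernoulliMeasure _ _ _)
  have hε_L2 : MemLp ε 2 μ :=
    (HasLaw.mk hme.aemeasurable he).memLp_of_memLp_id (memLp_id_gaussianReal 2)
  have hm_L2 : MemLp m 2 μ := ((memLp_const β0m).add (hp_L2.const_mul β1m)).add hε_L2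
  have hw : w = Phi (β0g + β1g - c) := congrArg Phi (by ring)
  have hE_phat : μ[phat] = Ep := by
    rw [integral_threshold hp_law hτ_law hpτ]
    simp only [Ep, z, hw]
    ring
  constructor
  · show μ[phat * m] - μ[phat] * μ[m] = _
    rw [← covariance_eq_sub hphat_L2 hm_L2,
      covariance_const_add_mul_add_of_indepFun hphat_L2 hp_L2 hε_L2 hphat_ε,
      covariance_threshold hp_law hτ_law hpτ, hE_phat, hw]
    exact (mul_assoc _ _ _).symm
  · rw [variance_eq_integral_mul_one_sub_of_ae_eq_zero_or_one hphat_m.aemeasurable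
      (ae_of_all _ fun _ => (ite_eq_or_eq _ _ _).symm), hE_phat]
end

section
/- For the negative binomial intercept-plus-offset model with known size s > 0 and log link, the score equation for β is e^β Σᵢ wᵢ e^{oᵢ}(yᵢ + s)/(e^β e^{oᵢ} + s) = Σᵢ wᵢ yᵢ; moreover, if (yᵢ, oᵢ, wᵢ) are i.i.d. with E[yᵢ | oᵢ, wᵢ] = e^{β₀ + oᵢ} and wᵢ e^{oᵢ}, wᵢ yᵢ have finite first moments, then E[wᵢ e^{oᵢ}(yᵢ + s)/(e^{β₀ + oᵢ} + s)] = E[wᵢ e^{oᵢ}], so the population score equation is solved by β₀ = log(E[wᵢ yᵢ]/E[wᵢ e^{oᵢ}]). -/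
/-!
The finite-sample score is the termwise derivative of the log-likelihood. For the population
part, conditioning on `(O, W)` lets one replace `Y` by `e^{β₀ + O}` in the expectation of `g(O, W) Y`
for any bounded measurable `g`. With `g = W e^O / (e^{β₀ + O} + s)` the factor `e^{β₀ + O} + s` then
cancels, and with `g = W` one gets `E[W Y] = e^{β₀} E[W e^O]`, which is the formula for `β₀`.
-/

open MeasureTheory Real

theorem hasDerivAt_weighted_negBinomial_logLik {ι : Type*} (t : Finset ι) {s : ℝ} (hs : 0 < s)
    (w y o : ι → ℝ) (b : ℝ) :
    HasDerivAt (fun b' => b' * ∑ i ∈ t, w i * y i -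
        ∑ i ∈ t, w i * (y i + s) * log (s + exp b' * exp (o i)))
      (∑ i ∈ t, w i * y i -
        exp b * ∑ i ∈ t, w i * exp (o i) * (y i + s) / (exp b * exp (o i) + s)) b := by
  have hterm : ∀ i ∈ t, HasDerivAt (fun b' => w i * (y i + s) * log (s + exp b' * exp (o i)))
      (exp b * (w i * exp (o i) * (y i + s) / (exp b * exp (o i) + s))) b := by
    intro i _
    have hpos : 0 < s + exp b * exp (o i) := by positivity
    refine (((((hasDerivAt_exp b).mul_const (exp (o i))).const_add s).log hpos.ne').const_mul
      (w i * (y i + s))).congr_deriv ?_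
    rw [add_comm (exp b * _)]
    field_simp
  rw [Finset.mul_sum]
  exact (((hasDerivAt_id' b).mul_const _).fun_sub (HasDerivAt.fun_sum hterm)).congr_deriv
    (by rw [one_mul])

section

variable {Ω : Type*} {m mΩ : MeasurableSpace Ω} {μ : Measure Ω}

theorem integral_mul_eq_integral_mul_condExp [IsFiniteMeasure μ] (hm : m ≤ mΩ) {f g : Ω → ℝ}
    (hf : StronglyMeasurable[m] f) (hg : Integrable g μ) (c : ℝ) (hf_bound : ∀ᵐ ω ∂μ, ‖f ω‖ ≤ c) :
    ∫ ω, f ω * g ω ∂μ = ∫ ω, f ω * (μ[g | m]) ω ∂μ :=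
  (integral_condExp hm).symm.trans
    (integral_congr_ae (condExp_stronglyMeasurable_mul_of_bound hm hf hg c hf_bound))

theorem integral_comp_mul_eq_of_condExp_comap_eq [IsFiniteMeasure μ] {β : Type*}
    [MeasurableSpace β] {X : Ω → β} (hX : Measurable X) {Y Z : Ω → ℝ} (hY : Integrable Y μ)
    (hYZ : μ[Y | MeasurableSpace.comap X inferInstance] =ᵐ[μ] Z) {g : β → ℝ} (hg : Measurable g)
    (c : ℝ) (hg_bound : ∀ᵐ ω ∂μ, ‖g (X ω)‖ ≤ c) :
    ∫ ω, g (X ω) * Y ω ∂μ = ∫ ω, g (X ω) * Z ω ∂μ := by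
  have hgX : StronglyMeasurable[MeasurableSpace.comap X inferInstance] (g ∘ X) :=
    (hg.comp (Measurable.of_comap_le le_rfl)).stronglyMeasurable
  refine (integral_mul_eq_integral_mul_condExp hX.comap_le hgX hY c hg_bound).trans ?_
  exact integral_congr_ae (hYZ.mono fun ω h => by simp only [Function.comp_apply, h])

theorem abs_mul_exp_div_exp_add_le {s : ℝ} (hs : 0 < s) (b o : ℝ) {w : ℝ} (hw : |w| ≤ 1) :
    |w * exp o / (exp (b + o) + s)| ≤ exp (-b) := by
  have hden : exp (b + o) ≤ exp (b + o) + s := by linarith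
  calc |w * exp o / (exp (b + o) + s)| = |w| * exp o / (exp (b + o) + s) := by
        rw [abs_div, abs_mul, abs_of_pos (exp_pos o), abs_of_pos (add_pos (exp_pos _) hs)]
    _ ≤ 1 * exp o / exp (b + o) := by gcongr
    _ = exp (-b) := by rw [one_mul, ← exp_sub]; ring_nf

variable [IsFiniteMeasure μ] {W O Y : Ω → ℝ} {b₀ : ℝ}

theorem integral_mul_eq_exp_mul_integral (hOW : Measurable fun ω => (O ω, W ω))
    (hW : ∀ ω, |W ω| ≤ 1) (hY : Integrable Y μ)
    (hcond : μ[Y | MeasurableSpace.comap (fun ω => (O ω, W ω)) inferInstance]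
        =ᵐ[μ] fun ω => exp (b₀ + O ω)) :
    ∫ ω, W ω * Y ω ∂μ = exp b₀ * ∫ ω, W ω * exp (O ω) ∂μ := by
  rw [integral_comp_mul_eq_of_condExp_comap_eq hOW hY hcond measurable_snd 1 (ae_of_all _ hW),
    ← integral_const_mul]
  simp only [exp_add]
  congr 1 with ω
  ring

theorem integral_weighted_negBinomial_score_eq {s : ℝ} (hs : 0 < s)
    (hOW : Measurable fun ω => (O ω, W ω)) (hW : ∀ ω, |W ω| ≤ 1) (hY : Integrable Y μ)
    (hWO : Integrable (fun ω => W ω * exp (O ω)) μ)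
    (hcond : μ[Y | MeasurableSpace.comap (fun ω => (O ω, W ω)) inferInstance]
        =ᵐ[μ] fun ω => exp (b₀ + O ω)) :
    ∫ ω, W ω * exp (O ω) * (Y ω + s) / (exp (b₀ + O ω) + s) ∂μ = ∫ ω, W ω * exp (O ω) ∂μ := by
  set g : ℝ × ℝ → ℝ := fun p => p.2 * exp p.1 / (exp (b₀ + p.1) + s)
  set f : Ω → ℝ := fun ω => g (O ω, W ω) with hf
  have hg : Measurable g := by fun_prop
  have hf_bound : ∀ ω, ‖f ω‖ ≤ exp (-b₀) := fun ω => abs_mul_exp_div_exp_add_le hs b₀ (O ω) (hW ω)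
  have hfm : AEStronglyMeasurable f μ := (hg.comp hOW).aestronglyMeasurable
  have hf_int : Integrable f μ := (integrable_const _).mono' hfm (ae_of_all _ hf_bound)
  have hfY_int : Integrable (fun ω => f ω * Y ω) μ := hY.bdd_mul hfm (ae_of_all _ hf_bound)
  have hf_den : ∀ ω, f ω * exp (b₀ + O ω) + s * f ω = W ω * exp (O ω) := fun ω => by
    have : exp (b₀ + O ω) + s ≠ 0 := (add_pos (exp_pos _) hs).ne'
    simp only [hf, g]
    field_simp
  have hfE_int : Integrable (fun ω => f ω * exp (b₀ + O ω)) μ :=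
    (hWO.sub (hf_int.const_mul s)).congr <| ae_of_all _ fun ω => by
      simp only [Pi.sub_apply]
      linarith [hf_den ω]
  calc ∫ ω, W ω * exp (O ω) * (Y ω + s) / (exp (b₀ + O ω) + s) ∂μ
      = ∫ ω, f ω * Y ω + s * f ω ∂μ := by
        congr 1 with ω
        simp only [hf, g]
        ring
    _ = ∫ ω, f ω * exp (b₀ + O ω) + s * f ω ∂μ := by
        rw [integral_add hfY_int (hf_int.const_mul s), integral_add hfE_int (hf_int.const_mul s),
          integral_comp_mul_eq_of_condExp_comap_eq hOW hY hcond hg _ (ae_of_all _ hf_bound)]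
    _ = ∫ ω, W ω * exp (O ω) ∂μ := by simp only [hf_den]

end

theorem stmt_15_general (s : ℝ) (hs : 0 < s)
    -- finite-sample part
    (n : ℕ) (w y o : Fin n → ℝ)
    -- population part
    {Ω : Type*} [MeasurableSpace Ω] (μ : Measure Ω) [IsProbabilityMeasure μ]
    (W O Y : Ω → ℝ) (b0 : ℝ)
    (hWm : Measurable W) (hOm : Measurable O)
    (hW01 : ∀ ω, W ω ∈ Set.Icc (0:ℝ) 1)
    (hYint : Integrable Y μ)
    (hWOint : Integrable (fun ω => W ω * Real.exp (O ω)) μ)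
    (hcond : μ[Y | MeasurableSpace.comap (fun ω => (O ω, W ω)) inferInstance]
        =ᵐ[μ] fun ω => Real.exp (b0 + O ω))
    (hWOpos : 0 < ∫ ω, W ω * Real.exp (O ω) ∂μ) :
    (∀ b : ℝ,
      deriv (fun b' : ℝ => b' * ∑ i, w i * y i -
          ∑ i, w i * (y i + s) * Real.log (s + Real.exp b' * Real.exp (o i))) b = 0 ↔
        Real.exp b * ∑ i, w i * Real.exp (o i) * (y i + s) /
            (Real.exp b * Real.exp (o i) + s) = ∑ i, w i * y i) ∧
    (∫ ω, W ω * Real.exp (O ω) * (Y ω + s) / (Real.exp (b0 + O ω) + s) ∂μ =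
        ∫ ω, W ω * Real.exp (O ω) ∂μ) ∧
    b0 = Real.log ((∫ ω, W ω * Y ω ∂μ) / (∫ ω, W ω * Real.exp (O ω) ∂μ)) := by
  have hOW : Measurable fun ω => (O ω, W ω) := hOm.prodMk hWm
  have hW : ∀ ω, |W ω| ≤ 1 := fun ω => abs_le.mpr ⟨by linarith [(hW01 ω).1], (hW01 ω).2⟩
  refine ⟨fun b => ?_, integral_weighted_negBinomial_score_eq hs hOW hW hYint hWOint hcond, ?_⟩
  · rw [(hasDerivAt_weighted_negBinomial_logLik Finset.univ hs w y o b).deriv, sub_eq_zero,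
      eq_comm]
  · rw [integral_mul_eq_exp_mul_integral hOW hW hYint hcond,
      mul_div_cancel_right₀ _ hWOpos.ne', log_exp]

/-- Negative binomial intercept-plus-offset model with known size s > 0 and log
link. (i) The score equation: the derivative of the weighted log-likelihood
L(β) = β Σᵢ wᵢyᵢ − Σᵢ wᵢ(yᵢ+s) log(s + e^β e^{oᵢ}) vanishes at β iff
e^β Σᵢ wᵢ e^{oᵢ}(yᵢ+s)/(e^β e^{oᵢ} + s) = Σᵢ wᵢyᵢ. (ii) Population version: if
E[Y | O, W] = e^{β₀+O} a.s., then E[W e^O (Y+s)/(e^{β₀+O}+s)] = E[W e^O], and the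
population score equation is solved by β₀ = log(E[WY]/E[W e^O]). -/
theorem stmt_15 (s : ℝ) (hs : 0 < s)
    -- finite-sample part
    (n : ℕ) (w y o : Fin n → ℝ) (hw : ∀ i, w i ∈ Set.Icc (0:ℝ) 1) (hy : ∀ i, 0 ≤ y i)
    -- population part
    {Ω : Type*} [MeasurableSpace Ω] (μ : Measure Ω) [IsProbabilityMeasure μ]
    (W O Y : Ω → ℝ) (b0 : ℝ)
    (hWm : Measurable W) (hOm : Measurable O) (hYm : Measurable Y)
    (hW01 : ∀ ω, W ω ∈ Set.Icc (0:ℝ) 1) (hY0 : ∀ ω, 0 ≤ Y ω)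
    (hYint : Integrable Y μ)
    (hWYint : Integrable (fun ω => W ω * Y ω) μ)
    (hWOint : Integrable (fun ω => W ω * Real.exp (O ω)) μ)
    (hcond : μ[Y | MeasurableSpace.comap (fun ω => (O ω, W ω)) inferInstance]
        =ᵐ[μ] fun ω => Real.exp (b0 + O ω))
    (hWYpos : 0 < ∫ ω, W ω * Y ω ∂μ) (hWOpos : 0 < ∫ ω, W ω * Real.exp (O ω) ∂μ) :
    (∀ b : ℝ,
      deriv (fun b' : ℝ => b' * ∑ i, w i * y i -
          ∑ i, w i * (y i + s) * Real.log (s + Real.exp b' * Real.exp (o i))) b = 0 ↔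
        Real.exp b * ∑ i, w i * Real.exp (o i) * (y i + s) /
            (Real.exp b * Real.exp (o i) + s) = ∑ i, w i * y i) ∧
    (∫ ω, W ω * Real.exp (O ω) * (Y ω + s) / (Real.exp (b0 + O ω) + s) ∂μ =
        ∫ ω, W ω * Real.exp (O ω) ∂μ) ∧
    b0 = Real.log ((∫ ω, W ω * Y ω ∂μ) / (∫ ω, W ω * Real.exp (O ω) ∂μ)) :=
  stmt_15_general s hs n w y o μ W O Y b0 hWm hOm hW01 hYint hWOint hcond hWOpos
end
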